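/- Break dropping: for any context E consisting only of interleavings of break-catching frames ⟦·⟧_brk and scoped blocks {·}_{L_j}^{N} where all L_j have the same domain and the same namespace N annotates each block, ⟨⟦E[⟦S'⟧_brk]⟧_brk | G; L'; N'⟩ →* ⟨𝕄 | G''; L''; N''⟩ if and only if ⟨⟦E[S']⟧_brk | G; L'; N'⟩ →* ⟨𝕄 | G''; L''; N''⟩ (the inner break frame is redundant). -/

import Mathlib

namespace Yul

abbrev Var := String

/-- Yul operational syntax: source-level statements and expressions merged with
    runtime constructs (modes, scoped blocks, break/continue frames, call frames, tuples). -/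
inductive Term (Val Op Ext : Type) : Type where
  | block (ss : List (Term Val Op Ext))
  | fundef (f : Var) (ps rs : List Var) (body : Term Val Op Ext)
  | letdecl (xs : List Var) (e : Term Val Op Ext)
  | assign (xs : List Var) (e : Term Val Op Ext)
  | ite (cond : Term Val Op Ext) (body : Term Val Op Ext)
  | switch (scrut : Term Val Op Ext) (cases : List (Val × Term Val Op Ext))
      (dflt : Term Val Op Ext)
  | forloop (init cond post body : Term Val Op Ext)
  | brk
  | cont
  | leave
  | call (f : Var) (args : List (Term Val Op Ext))
  | opcall (op : Op) (args : List (Term Val Op Ext))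
  | var (x : Var)
  | val (v : Val)
  | regular
  | ext (m : Ext)
  | tuple (vs : List Val)
  | scopedBlock (ss : List (Term Val Op Ext)) (Lsave : Var → Option Val)
      (Nsave : Var → Option (List Var × List Var × Term Val Op Ext))
  | brkFrame (s : Term Val Op Ext)
  | cntFrame (s : Term Val Op Ext)
  | callFrame (s : Term Val Op Ext) (Lsave : Var → Option Val) (rets : List Var)

/-- Local variable stores. -/
abbrev Store (Val : Type) := Var → Option Val

/-- Function namespaces. -/
abbrev NS (Val Op Ext : Type) := Var → Option (List Var × List Var × Term Val Op Ext)

variable {Val Op Ext Gl : Type}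

def Dom (L : Store Val) : Set Var := {x | (L x).isSome}

/-- `restrict L1 L` is `L1 ↾ L` : restriction of `L1` to the domain of `L`. -/
def restrict (L1 L : Store Val) : Store Val :=
  fun x => if (L x).isSome then L1 x else none

def updStore (L : Store Val) (x : Var) (v : Val) : Store Val :=
  fun y => if y = x then some v else L y

def updMany (L : Store Val) (xs : List Var) (vs : List Val) : Store Val :=
  (List.zip xs vs).foldl (fun L p => updStore L p.1 p.2) L

def emptyStore : Store Val := fun _ => none

def updNS (N : NS Val Op Ext) (f : Var)
    (d : List Var × List Var × Term Val Op Ext) : NS Val Op Ext :=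
  fun y => if y = f then some d else N y

/-- `funsof`: extend the namespace with the functions defined at the top level of a block. -/
def extendFuns (ss : List (Term Val Op Ext)) (N : NS Val Op Ext) : NS Val Op Ext :=
  ss.foldl (fun N s =>
    match s with
    | .fundef f ps rs body => updNS N f (ps, rs, body)
    | _ => N) N

/-- Return-value packaging: `⟨⟩ = regular`, `⟨v⟩ = v`, `⟨v⃗⟩` a tuple for more values. -/
def mkRet (vs : List Val) : Term Val Op Ext :=
  match vs with
  | [] => .regular
  | [v] => .val v
  | vs => .tuple vs

/-- A Yul dialect: truth/falsehood of values, the default value, and the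
    (possibly failing) opcode evaluation relation `⇓_opc`. -/
structure Dialect (Val Op Ext Gl : Type) where
  isTrue : Val → Prop
  isFalse : Val → Prop
  zero : Val
  opc : Op → List Val → Gl → (List Val ⊕ Ext) → Gl → Prop

def IsIrregularCore (t : Term Val Op Ext) : Prop :=
  t = .brk ∨ t = .cont ∨ t = .leave

/-- The modes `regular`, `break`, `continue`, `leave`. -/
def IsModeCore (t : Term Val Op Ext) : Prop :=
  t = .regular ∨ t = .brk ∨ t = .cont ∨ t = .leave

/-- All modes, including external irregular modes ℳ. -/
def IsMode (t : Term Val Op Ext) : Prop :=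
  IsModeCore t ∨ ∃ m, t = .ext m

/-- Results of completed expressions/calls: a value, a tuple, or `regular`. -/
def IsRet (t : Term Val Op Ext) : Prop :=
  (∃ v, t = .val v) ∨ (∃ vs, t = .tuple vs) ∨ t = .regular

/-- `S_ret ::= v | ⟨v⃗⟩ | 𝕄`. -/
def IsRetAny (t : Term Val Op Ext) : Prop := IsRet t ∨ IsModeCore t

/-- Evaluation contexts. -/
inductive Ctx (Val Op Ext : Type) : Type where
  | hole
  | scopedC (E : Ctx Val Op Ext) (rest : List (Term Val Op Ext)) (L : Store Val)
      (N : NS Val Op Ext)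
  | letC (xs : List Var) (E : Ctx Val Op Ext)
  | assignC (xs : List Var) (E : Ctx Val Op Ext)
  | cntC (E : Ctx Val Op Ext)
  | brkC (E : Ctx Val Op Ext)
  | iteC (E : Ctx Val Op Ext) (body : Term Val Op Ext)
  | switchC (E : Ctx Val Op Ext) (cases : List (Val × Term Val Op Ext))
      (dflt : Term Val Op Ext)
  | callC (f : Var) (before : List (Term Val Op Ext)) (E : Ctx Val Op Ext)
      (after : List Val)
  | opcallC (op : Op) (before : List (Term Val Op Ext)) (E : Ctx Val Op Ext)
      (after : List Val)
  | frameC (E : Ctx Val Op Ext) (L : Store Val) (rets : List Var)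

def plug (E : Ctx Val Op Ext) (t : Term Val Op Ext) : Term Val Op Ext :=
  match E with
  | .hole => t
  | .scopedC E rest L N => .scopedBlock (plug E t :: rest) L N
  | .letC xs E => .letdecl xs (plug E t)
  | .assignC xs E => .assign xs (plug E t)
  | .cntC E => .cntFrame (plug E t)
  | .brkC E => .brkFrame (plug E t)
  | .iteC E body => .ite (plug E t) body
  | .switchC E cs d => .switch (plug E t) cs d
  | .callC f before E after => .call f (before ++ plug E t :: after.map Term.val)
  | .opcallC op before E after => .opcall op (before ++ plug E t :: after.map Term.val)
  | .frameC E L rets => .callFrame (plug E t) L rets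

/-- Base small-step reduction rules of Yul. -/
inductive Base (D : Dialect Val Op Ext Gl) :
    Term Val Op Ext → Gl → Store Val → NS Val Op Ext →
    Term Val Op Ext → Gl → Store Val → NS Val Op Ext → Prop where
  | blockEnter (ss G L N) (h : ss ≠ []) :
      Base D (.block ss) G L N (.scopedBlock ss L N) G L (extendFuns ss N)
  | blockEmpty (G L N) :
      Base D (.block []) G L N .regular G L N
  | scopedNext (ss L0 N0 G L N) (h : ss ≠ []) :
      Base D (.scopedBlock (.regular :: ss) L0 N0) G L N (.scopedBlock ss L0 N0) G L N
  | scopedExitReg (L0 N0 G L N) :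
      Base D (.scopedBlock [.regular] L0 N0) G L N .regular G (restrict L L0) N0
  | scopedExitIrr (m ss L0 N0 G L N) (h : IsIrregularCore m) :
      Base D (.scopedBlock (m :: ss) L0 N0) G L N m G (restrict L L0) N0
  | fundefSkip (f ps rs body G L N) :
      Base D (.fundef f ps rs body) G L N .regular G L N
  | letSingle (x v G L N) (h : L x = none) :
      Base D (.letdecl [x] (.val v)) G L N .regular G (updStore L x v) N
  | letTuple (xs vs G L N) (hlen : xs.length = vs.length)
      (hfresh : ∀ x ∈ xs, L x = none) :
      Base D (.letdecl xs (.tuple vs)) G L N .regular G (updMany L xs vs) N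
  | assignSingle (x v G L N) (h : (L x).isSome) :
      Base D (.assign [x] (.val v)) G L N .regular G (updStore L x v) N
  | assignTuple (xs vs G L N) (hlen : xs.length = vs.length)
      (hdom : ∀ x ∈ xs, (L x).isSome) :
      Base D (.assign xs (.tuple vs)) G L N .regular G (updMany L xs vs) N
  | iteFalse (v body G L N) (h : D.isFalse v) :
      Base D (.ite (.val v) body) G L N .regular G L N
  | iteTrue (v body G L N) (h : D.isTrue v) :
      Base D (.ite (.val v) body) G L N body G L N
  | switchDefault (v cs d G L N) (h : ∀ c ∈ cs, c.1 ≠ v) :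
      Base D (.switch (.val v) cs d) G L N d G L N
  | switchCase (c body pre post d G L N) (h : ∀ p ∈ pre, p.1 ≠ c) :
      Base D (.switch (.val c) (pre ++ (c, body) :: post) d) G L N body G L N
  | forInit (ss M Sp Sb G L N) (h : ss ≠ []) :
      Base D (.forloop (.block ss) M Sp Sb) G L N
        (.block (ss ++ [.forloop (.block []) M Sp Sb])) G L N
  | forUnfold (M Sp Sb G L N) :
      Base D (.forloop (.block []) M Sp Sb) G L N
        (.brkFrame (.ite M
          (.block [.cntFrame Sb, Sp, .forloop (.block []) M Sp Sb]))) G L N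
  | cntPass (m G L N) (h : m = .regular ∨ m = .brk ∨ m = .leave) :
      Base D (.cntFrame m) G L N m G L N
  | cntCatch (G L N) :
      Base D (.cntFrame .cont) G L N .regular G L N
  | brkPass (m G L N) (h : m = .regular ∨ m = .leave) :
      Base D (.brkFrame m) G L N m G L N
  | brkCatch (G L N) :
      Base D (.brkFrame .brk) G L N .regular G L N
  | varLookup (x v G L N) (h : L x = some v) :
      Base D (.var x) G L N (.val v) G L N
  | callEnter (f vs ps rs body G L N) (hN : N f = some (ps, rs, body))
      (hlen : ps.length = vs.length) :
      Base D (.call f (vs.map Term.val)) G L N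
        (.callFrame body L rs) G
        (updMany (updMany emptyStore rs (rs.map fun _ => D.zero)) ps vs) N
  | frameExit (m Lsave rs ws G L N) (hm : m = .leave ∨ m = .regular)
      (hws : List.Forall₂ (fun z w => L z = some w) rs ws) :
      Base D (.callFrame m Lsave rs) G L N (mkRet ws) G Lsave N
  | opcallOk (op vs ws G G' L N) (h : D.opc op vs G (Sum.inl ws) G') :
      Base D (.opcall op (vs.map Term.val)) G L N (mkRet ws) G' L N
  | opcallErr (op vs m G G' L N) (h : D.opc op vs G (Sum.inr m) G') :
      Base D (.opcall op (vs.map Term.val)) G L N (.ext m) G' L N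

/-- Configurations `⟨S | G; L; N⟩`. -/
abbrev Config (Val Op Ext Gl : Type) :=
  Term Val Op Ext × Gl × Store Val × NS Val Op Ext

/-- The small-step relation: base rules closed under evaluation contexts,
    plus the top-level propagation of external irregular modes. -/
inductive Step (D : Dialect Val Op Ext Gl) :
    Config Val Op Ext Gl → Config Val Op Ext Gl → Prop where
  | ctx (E S G L N S' G' L' N') (h : Base D S G L N S' G' L' N') :
      Step D (plug E S, G, L, N) (plug E S', G', L', N')
  | extProp (E m G L N) (h : E ≠ Ctx.hole) :
      Step D (plug E (.ext m), G, L, N) (.ext m, G, L, N)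

/-- Zero or more small steps. -/
abbrev Steps (D : Dialect Val Op Ext Gl) :
    Config Val Op Ext Gl → Config Val Op Ext Gl → Prop :=
  Relation.ReflTransGen (Step D)

mutual
/-- Big-step evaluation of statements `⟨S | G; L; N⟩ ⇓ ⟨𝕄 | G'; L'; N'⟩`. -/
inductive Big (D : Dialect Val Op Ext Gl) :
    Term Val Op Ext → Gl → Store Val → NS Val Op Ext →
    Term Val Op Ext → Gl → Store Val → NS Val Op Ext → Prop where
  | blockB {ss M G L N G1 L1}
      (h : BigSeq D ss G L (extendFuns ss N) M G1 L1 (extendFuns ss N)) :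
      Big D (.block ss) G L N M G1 (restrict L1 L) N
  | fundefB {f ps rs body G L N} :
      Big D (.fundef f ps rs body) G L N .regular G L N
  | brkB {G L N} : Big D .brk G L N .brk G L N
  | contB {G L N} : Big D .cont G L N .cont G L N
  | leaveB {G L N} : Big D .leave G L N .leave G L N
  | letSingleB {x e v G L N G1 L1}
      (h1 : BigExp D e G L N (.val v) G1 L1 N) (h2 : L x = none) :
      Big D (.letdecl [x] e) G L N .regular G1 (updStore L1 x v) N
  | letTupleB {xs e vs G L N G1 L1}
      (h1 : BigExp D e G L N (.tuple vs) G1 L1 N)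
      (hlen : xs.length = vs.length) (hfresh : ∀ x ∈ xs, L x = none) :
      Big D (.letdecl xs e) G L N .regular G1 (updMany L1 xs vs) N
  | assignSingleB {x e v G L N G1 L1}
      (h1 : BigExp D e G L N (.val v) G1 L1 N) (h2 : (L x).isSome) :
      Big D (.assign [x] e) G L N .regular G1 (updStore L1 x v) N
  | assignTupleB {xs e vs G L N G1 L1}
      (h1 : BigExp D e G L N (.tuple vs) G1 L1 N)
      (hlen : xs.length = vs.length) (hdom : ∀ x ∈ xs, (L x).isSome) :
      Big D (.assign xs e) G L N .regular G1 (updMany L1 xs vs) N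
  | exprB {M G L N G' L'}
      (h : BigExp D M G L N .regular G' L' N) :
      Big D M G L N .regular G' L' N
  | ifF {M body v G L N G0 L0}
      (h1 : BigExp D M G L N (.val v) G0 L0 N) (h2 : D.isFalse v) :
      Big D (.ite M body) G L N .regular G0 L0 N
  | ifT {M body v MM G L N G0 L0 G1 L1}
      (h1 : BigExp D M G L N (.val v) G0 L0 N) (h2 : D.isTrue v)
      (h3 : Big D body G0 L0 N MM G1 L1 N) :
      Big D (.ite M body) G L N MM G1 L1 N
  | swD {M cs d v MM G L N G0 L0 G1 L1}
      (h1 : BigExp D M G L N (.val v) G0 L0 N)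
      (h2 : ∀ c ∈ cs, c.1 ≠ v)
      (h3 : Big D d G0 L0 N MM G1 L1 N) :
      Big D (.switch M cs d) G L N MM G1 L1 N
  | swC {M pre c body post d MM G L N G0 L0 G1 L1}
      (h1 : BigExp D M G L N (.val c) G0 L0 N)
      (hpre : ∀ p ∈ pre, p.1 ≠ c)
      (h3 : Big D body G0 L0 N MM G1 L1 N) :
      Big D (.switch M (pre ++ (c, body) :: post) d) G L N MM G1 L1 N
  | forInitB {ss M Sp Sb MM G L N G2 L2} (hne : ss ≠ [])
      (h : Big D (.block (ss ++ [.forloop (.block []) M Sp Sb])) G L N MM G2 L2 N) :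
      Big D (.forloop (.block ss) M Sp Sb) G L N MM G2 L2 N
  | forFalseB {M Sp Sb v G L N G1 L1}
      (h1 : BigExp D M G L N (.val v) G1 L1 N) (h2 : D.isFalse v) :
      Big D (.forloop (.block []) M Sp Sb) G L N .regular G1 L1 N
  | forHalt1B {M Sp Sb v Mlb Mout G L N G1 L1 G2 L2}
      (h1 : BigExp D M G L N (.val v) G1 L1 N) (h2 : D.isTrue v)
      (h3 : Big D Sb G1 L1 N Mlb G2 L2 N)
      (h4 : (Mlb = .leave ∧ Mout = .leave) ∨ (Mlb = .brk ∧ Mout = .regular)) :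
      Big D (.forloop (.block []) M Sp Sb) G L N Mout G2 L2 N
  | forHalt2B {M Sp Sb v MM G L N G1 L1 G2 L2 G3 L3}
      (h1 : BigExp D M G L N (.val v) G1 L1 N) (h2 : D.isTrue v)
      (h3 : Big D Sb G1 L1 N MM G2 L2 N)
      (h4 : MM = .regular ∨ MM = .cont)
      (h5 : Big D Sp G2 L2 N .leave G3 L3 N) :
      Big D (.forloop (.block []) M Sp Sb) G L N .leave G3 L3 N
  | forLoopB {M Sp Sb v MM MM' G L N G1 L1 G2 L2 G3 L3 G4 L4}
      (h1 : BigExp D M G L N (.val v) G1 L1 N) (h2 : D.isTrue v)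
      (h3 : Big D Sb G1 L1 N MM G2 L2 N)
      (h4 : MM = .regular ∨ MM = .cont)
      (h5 : Big D Sp G2 L2 N .regular G3 L3 N)
      (h6 : Big D (.forloop (.block []) M Sp Sb) G3 L3 N MM' G4 L4 N) :
      Big D (.forloop (.block []) M Sp Sb) G L N MM' G4 L4 N

/-- Big-step evaluation of statement sequences `⇓_seq`. -/
inductive BigSeq (D : Dialect Val Op Ext Gl) :
    List (Term Val Op Ext) → Gl → Store Val → NS Val Op Ext →
    Term Val Op Ext → Gl → Store Val → NS Val Op Ext → Prop where
  | nilB {G L N} : BigSeq D [] G L N .regular G L N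
  | consReg {s ss MM G L N G1 L1 G2 L2}
      (h1 : Big D s G L N .regular G1 L1 N)
      (h2 : BigSeq D ss G1 L1 N MM G2 L2 N) :
      BigSeq D (s :: ss) G L N MM G2 L2 N
  | consIrr {s ss MM G L N G1 L1}
      (h1 : Big D s G L N MM G1 L1 N) (h2 : IsIrregularCore MM) :
      BigSeq D (s :: ss) G L N MM G1 L1 N

/-- Big-step evaluation of expressions `⇓_exp`. -/
inductive BigExp (D : Dialect Val Op Ext Gl) :
    Term Val Op Ext → Gl → Store Val → NS Val Op Ext →
    Term Val Op Ext → Gl → Store Val → NS Val Op Ext → Prop where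
  | identB {x v G L N} (h : L x = some v) :
      BigExp D (.var x) G L N (.val v) G L N
  | valB {v G L N} : BigExp D (.val v) G L N (.val v) G L N
  | funCallB {f args vs ps rs body MM ws G L N Gn Ln G'' L''}
      (hargs : BigArgs D args G L N vs Gn Ln)
      (hN : N f = some (ps, rs, body))
      (hlen : ps.length = vs.length)
      (hbody : Big D body Gn
        (updMany (updMany emptyStore rs (rs.map fun _ => D.zero)) ps vs) N MM G'' L'' N)
      (hret : List.Forall₂ (fun z w => L'' z = some w) rs ws) :
      BigExp D (.call f args) G L N (mkRet ws) G'' Ln N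
  | opCallB {op args vs ws G L N Gn Ln G''}
      (hargs : BigArgs D args G L N vs Gn Ln)
      (h : D.opc op vs Gn (Sum.inl ws) G'') :
      BigExp D (.opcall op args) G L N (mkRet ws) G'' Ln N

/-- Right-to-left evaluation of argument lists. -/
inductive BigArgs (D : Dialect Val Op Ext Gl) :
    List (Term Val Op Ext) → Gl → Store Val → NS Val Op Ext →
    List Val → Gl → Store Val → Prop where
  | nilA {G L N} : BigArgs D [] G L N [] G L
  | consA {M Ms v vs G L N G1 L1 G2 L2}
      (htail : BigArgs D Ms G L N vs G1 L1)
      (hhead : BigExp D M G1 L1 N (.val v) G2 L2 N) :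
      BigArgs D (M :: Ms) G L N (v :: vs) G2 L2
end

/-- Source-level syntax: no runtime constructs. -/
inductive IsSource : Term Val Op Ext → Prop where
  | block {ss} (h : ∀ s ∈ ss, IsSource s) : IsSource (.block ss)
  | fundef {f ps rs body} (h : IsSource body) : IsSource (.fundef f ps rs body)
  | letdecl {xs e} (h : IsSource e) : IsSource (.letdecl xs e)
  | assign {xs e} (h : IsSource e) : IsSource (.assign xs e)
  | ite {c b} (h1 : IsSource c) (h2 : IsSource b) : IsSource (.ite c b)
  | switch {M cs d} (h1 : IsSource M) (h2 : ∀ c ∈ cs, IsSource c.2)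
      (h3 : IsSource d) : IsSource (.switch M cs d)
  | forloop {i c p b} (h1 : IsSource i) (h2 : IsSource c) (h3 : IsSource p)
      (h4 : IsSource b) : IsSource (.forloop i c p b)
  | brk : IsSource .brk
  | cont : IsSource .cont
  | leave : IsSource .leave
  | call {f args} (h : ∀ a ∈ args, IsSource a) : IsSource (.call f args)
  | opcall {op args} (h : ∀ a ∈ args, IsSource a) : IsSource (.opcall op args)
  | var {x} : IsSource (.var x)
  | val {v} : IsSource (.val v)

/-- Syntactic restriction on halting statements: `HaltOK inLoop inFun S` says that
    every `break`/`continue` in `S` occurs inside the body of some enclosing for-loop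
    (not separated from it by a function definition) and every `leave` occurs inside
    some enclosing function body; `inLoop`/`inFun` record the ambient context. -/
inductive HaltOK : Bool → Bool → Term Val Op Ext → Prop where
  | block {il fn ss} (h : ∀ s ∈ ss, HaltOK il fn s) : HaltOK il fn (.block ss)
  | fundef {il fn f ps rs body} (h : HaltOK false true body) :
      HaltOK il fn (.fundef f ps rs body)
  | letdecl {il fn xs e} (h : HaltOK il fn e) : HaltOK il fn (.letdecl xs e)
  | assign {il fn xs e} (h : HaltOK il fn e) : HaltOK il fn (.assign xs e)
  | ite {il fn c b} (h1 : HaltOK il fn c) (h2 : HaltOK il fn b) :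
      HaltOK il fn (.ite c b)
  | switch {il fn M cs d} (h1 : HaltOK il fn M) (h2 : ∀ c ∈ cs, HaltOK il fn c.2)
      (h3 : HaltOK il fn d) : HaltOK il fn (.switch M cs d)
  | forloop {il fn i c p b} (h1 : HaltOK il fn i) (h2 : HaltOK il fn c)
      (h3 : HaltOK il fn p) (h4 : HaltOK true fn b) :
      HaltOK il fn (.forloop i c p b)
  | brk {fn} : HaltOK true fn .brk
  | cont {fn} : HaltOK true fn .cont
  | leave {il} : HaltOK il true .leave
  | call {il fn f args} (h : ∀ a ∈ args, HaltOK il fn a) : HaltOK il fn (.call f args)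
  | opcall {il fn op args} (h : ∀ a ∈ args, HaltOK il fn a) :
      HaltOK il fn (.opcall op args)
  | var {il fn x} : HaltOK il fn (.var x)
  | val {il fn v} : HaltOK il fn (.val v)

/-- Frames: break-catching frames `⟦·⟧_brk` or scoped-block frames `{·}_L^N`. -/
inductive Frame (Val : Type) where
  | brkF
  | blockF (L : Store Val)

/-- Apply a list of frames (innermost first), all blocks annotated with namespace `N`. -/
def applyFrames (N : NS Val Op Ext) :
    List (Frame Val) → Term Val Op Ext → Term Val Op Ext
  | [], t => t
  | .brkF :: fs, t => applyFrames N fs (.brkFrame t)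
  | .blockF L :: fs, t => applyFrames N fs (.scopedBlock [t] L N)

/-- Ascending chain of block-frame domains, starting from `d` (innermost first). -/
def Asc (d : Set Var) : List (Frame Val) → Prop
  | [] => True
  | .brkF :: fs => Asc d fs
  | .blockF L :: fs => d ⊆ Dom L ∧ Asc (Dom L) fs

section BreakDropping

variable {Val Op Ext Gl : Type} {D : Dialect Val Op Ext Gl} {N : NS Val Op Ext}

/-- Wrap a single frame around a term. -/
def wrapF (N : NS Val Op Ext) : Frame Val → Term Val Op Ext → Term Val Op Ext
  | .brkF, t => .brkFrame t
  | .blockF L, t => .scopedBlock [t] L N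

lemma applyFrames_cons (g : Frame Val) (gs : List (Frame Val)) (t : Term Val Op Ext) :
    applyFrames N (g :: gs) t = applyFrames N gs (wrapF N g t) := by
  cases g <;> rfl

lemma applyFrames_append (fs gs : List (Frame Val)) (t : Term Val Op Ext) :
    applyFrames N (fs ++ gs) t = applyFrames N gs (applyFrames N fs t) := by
  induction fs generalizing t with
  | nil => rfl
  | cons g fs ih => cases g <;> simp [applyFrames, ih]

lemma applyFrames_shape (gs : List (Frame Val)) (hne : gs ≠ []) (t : Term Val Op Ext) :
    (∃ y, applyFrames N gs t = .brkFrame y) ∨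
    (∃ ss L0 N0, applyFrames N gs t = .scopedBlock ss L0 N0) := by
  induction gs generalizing t with
  | nil => exact absurd rfl hne
  | cons g gs ih =>
    cases gs with
    | nil =>
      cases g with
      | brkF => exact Or.inl ⟨t, rfl⟩
      | blockF L => exact Or.inr ⟨_, _, _, rfl⟩
    | cons g' gs' =>
      rw [applyFrames_cons]
      exact ih (by simp) _

lemma applyFrames_ne_mode (gs : List (Frame Val)) (hne : gs ≠ [])
    (t MM : Term Val Op Ext) (hM : IsMode MM) : applyFrames N gs t ≠ MM := by
  rcases hM with (rfl | rfl | rfl | rfl) | ⟨m, rfl⟩ <;>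
    rcases applyFrames_shape (N := N) gs hne t with ⟨y, h⟩ | ⟨ss, L0, N0, h⟩ <;>
      rw [h] <;> simp

/-- The frames list as an evaluation context (composed around `E`). -/
def framesCtx (N : NS Val Op Ext) : List (Frame Val) → Ctx Val Op Ext → Ctx Val Op Ext
  | [], E => E
  | .brkF :: fsl, E => framesCtx N fsl (.brkC E)
  | .blockF L :: fsl, E => framesCtx N fsl (.scopedC E [] L N)

lemma plug_framesCtx (gs : List (Frame Val)) (E : Ctx Val Op Ext) (t : Term Val Op Ext) :
    plug (framesCtx N gs E) t = applyFrames N gs (plug E t) := by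
  induction gs generalizing E with
  | nil => rfl
  | cons g gs ih => cases g <;> simp [framesCtx, applyFrames, ih, plug]

lemma framesCtx_eq_hole (gs : List (Frame Val)) (E : Ctx Val Op Ext)
    (h : framesCtx N gs E = .hole) : gs = [] ∧ E = .hole := by
  induction gs generalizing E with
  | nil => exact ⟨rfl, h⟩
  | cons g gs ih =>
    cases g with
    | brkF => exact absurd (ih _ h).2 (by simp)
    | blockF L => exact absurd (ih _ h).2 (by simp)

lemma stepA (gs : List (Frame Val)) (E : Ctx Val Op Ext)
    {S S' : Term Val Op Ext} {G G' : Gl} {L L' : Store Val} {Nn N'' : NS Val Op Ext}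
    (h : Base D S G L Nn S' G' L' N'') :
    Step D (applyFrames N gs (plug E S), G, L, Nn)
      (applyFrames N gs (plug E S'), G', L', N'') := by
  rw [← plug_framesCtx, ← plug_framesCtx]
  exact .ctx _ _ _ _ _ _ _ _ _ h

lemma stepB (gs : List (Frame Val)) (E : Ctx Val Op Ext) (m : Ext)
    (G : Gl) (L : Store Val) (Nn : NS Val Op Ext)
    (h : framesCtx N gs E ≠ .hole) :
    Step D (applyFrames N gs (plug E (.ext m)), G, L, Nn) (.ext m, G, L, Nn) := by
  rw [← plug_framesCtx]
  exact .extProp _ _ _ _ _ h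

lemma step_inv {c1 c2 : Config Val Op Ext Gl} (h : Step D c1 c2) :
    (∃ E S G L Nn S' G' L' N', Base D S G L Nn S' G' L' N' ∧
        c1 = (plug E S, G, L, Nn) ∧ c2 = (plug E S', G', L', N')) ∨
    (∃ E m G L Nn, E ≠ Ctx.hole ∧ c1 = (plug E (.ext m), G, L, Nn) ∧
        c2 = (.ext m, G, L, Nn)) := by
  cases h with
  | ctx E S G L Nn S' G' L' N' hb => exact Or.inl ⟨E, S, G, L, Nn, S', G', L', N', hb, rfl, rfl⟩
  | extProp E m G L Nn hE => exact Or.inr ⟨E, m, G, L, Nn, hE, rfl, rfl⟩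

lemma base_wrap {g : Frame Val} {x S' : Term Val Op Ext} {G G' : Gl}
    {L L' : Store Val} {Nn N' : NS Val Op Ext}
    (hb : Base D (wrapF N g x) G L Nn S' G' L' N') :
    (g = .brkF ∧ (((x = .regular ∨ x = .leave) ∧ S' = x ∧ G' = G ∧ L' = L ∧ N' = Nn) ∨
        (x = .brk ∧ S' = .regular ∧ G' = G ∧ L' = L ∧ N' = Nn))) ∨
    (∃ Lj, g = .blockF Lj ∧ (x = .regular ∨ IsIrregularCore x) ∧
        S' = x ∧ G' = G ∧ L' = restrict L Lj ∧ N' = N) := by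
  cases g with
  | brkF =>
    simp only [wrapF] at hb
    cases hb with
    | brkPass m G L Nn h => exact Or.inl ⟨rfl, Or.inl ⟨h, rfl, rfl, rfl, rfl⟩⟩
    | brkCatch G L Nn => exact Or.inl ⟨rfl, Or.inr ⟨rfl, rfl, rfl, rfl, rfl⟩⟩
  | blockF Lj =>
    simp only [wrapF] at hb
    cases hb with
    | scopedNext ss L0 N0 G L Nn h => exact absurd rfl h
    | scopedExitReg L0 N0 G L Nn => exact Or.inr ⟨Lj, rfl, Or.inl rfl, rfl, rfl, rfl, rfl⟩
    | scopedExitIrr m ss L0 N0 G L Nn h =>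
      exact Or.inr ⟨Lj, rfl, Or.inr h, rfl, rfl, rfl, rfl⟩

lemma base_wrap_mode {g : Frame Val} {x S' : Term Val Op Ext} {G G' : Gl}
    {L L' : Store Val} {Nn N' : NS Val Op Ext}
    (hb : Base D (wrapF N g x) G L Nn S' G' L' N') : IsModeCore x := by
  rcases base_wrap hb with ⟨_, ⟨h, _⟩ | ⟨h, _⟩⟩ | ⟨Lj, _, h, _⟩ <;>
    simp [IsModeCore, IsIrregularCore] at * <;> tauto

lemma invStep (gs : List (Frame Val)) {u : Term Val Op Ext}
    {c : Config Val Op Ext Gl} {G : Gl} {L : Store Val} {Nn : NS Val Op Ext}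
    (h : Step D (applyFrames N gs u, G, L, Nn) c) :
    (∃ E S S' G' L' N', Base D S G L Nn S' G' L' N' ∧ u = plug E S ∧
        c = (applyFrames N gs (plug E S'), G', L', N')) ∨
    (∃ E m, u = plug E (.ext m) ∧ (gs = [] → E ≠ .hole) ∧ c = (.ext m, G, L, Nn)) ∨
    (∃ g gs' S' G' L' N', gs = g :: gs' ∧
        Base D (wrapF N g u) G L Nn S' G' L' N' ∧
        c = (applyFrames N gs' S', G', L', N')) := by
  induction gs generalizing u with
  | nil =>
    rcases step_inv h with ⟨E, S, G0, L0, N0, S'', G', L', N', hb, h1, h2⟩ |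
        ⟨E, m, G0, L0, N0, hE, h1, h2⟩
    · simp only [applyFrames, Prod.mk.injEq] at h1
      obtain ⟨h1a, h1b, h1c, h1d⟩ := h1
      subst h1b; subst h1c; subst h1d
      exact Or.inl ⟨E, S, S'', G', L', N', hb, h1a, h2⟩
    · simp only [applyFrames, Prod.mk.injEq] at h1
      obtain ⟨h1a, h1b, h1c, h1d⟩ := h1
      subst h1b; subst h1c; subst h1d
      exact Or.inr (Or.inl ⟨E, m, h1a, fun _ => hE, h2⟩)
  | cons g gs ih =>
    rw [applyFrames_cons] at h
    rcases ih h with ⟨E, S, S'', G', L', N', hb, h1, h2⟩ | ⟨E, m, h1, hE, h2⟩ |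
        ⟨g', gs'', S'', G', L', N', h1, hb, h2⟩
    · -- redex inside wrapF N g u
      cases g with
      | brkF =>
        cases E with
        | hole =>
          simp only [wrapF, plug] at h1
          subst h1
          exact Or.inr (Or.inr ⟨.brkF, gs, S'', G', L', N', rfl, hb, h2⟩)
        | brkC E' =>
          simp only [wrapF, plug, Term.brkFrame.injEq] at h1
          exact Or.inl ⟨E', S, S'', G', L', N', hb, h1, h2⟩
        | scopedC E' rest L0 N0 => simp [wrapF, plug] at h1
        | letC xs E' => simp [wrapF, plug] at h1
        | assignC xs E' => simp [wrapF, plug] at h1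
        | cntC E' => simp [wrapF, plug] at h1
        | iteC E' body => simp [wrapF, plug] at h1
        | switchC E' cs dd => simp [wrapF, plug] at h1
        | callC f before E' after => simp [wrapF, plug] at h1
        | opcallC op before E' after => simp [wrapF, plug] at h1
        | frameC E' L0 rets => simp [wrapF, plug] at h1
      | blockF Lj =>
        cases E with
        | hole =>
          simp only [wrapF, plug] at h1
          subst h1
          exact Or.inr (Or.inr ⟨.blockF Lj, gs, S'', G', L', N', rfl, hb, h2⟩)
        | scopedC E' rest L0 N0 =>
          simp only [wrapF, plug, Term.scopedBlock.injEq, List.cons.injEq] at h1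
          obtain ⟨⟨h1a, h1b⟩, h1c, h1d⟩ := h1
          subst h1b; subst h1c; subst h1d
          exact Or.inl ⟨E', S, S'', G', L', N', hb, h1a, h2⟩
        | brkC E' => simp [wrapF, plug] at h1
        | letC xs E' => simp [wrapF, plug] at h1
        | assignC xs E' => simp [wrapF, plug] at h1
        | cntC E' => simp [wrapF, plug] at h1
        | iteC E' body => simp [wrapF, plug] at h1
        | switchC E' cs dd => simp [wrapF, plug] at h1
        | callC f before E' after => simp [wrapF, plug] at h1
        | opcallC op before E' after => simp [wrapF, plug] at h1
        | frameC E' L0 rets => simp [wrapF, plug] at h1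
    · -- ext propagation
      cases g with
      | brkF =>
        cases E with
        | hole => simp [wrapF, plug] at h1
        | brkC E' =>
          simp only [wrapF, plug, Term.brkFrame.injEq] at h1
          exact Or.inr (Or.inl ⟨E', m, h1, by simp, h2⟩)
        | scopedC E' rest L0 N0 => simp [wrapF, plug] at h1
        | letC xs E' => simp [wrapF, plug] at h1
        | assignC xs E' => simp [wrapF, plug] at h1
        | cntC E' => simp [wrapF, plug] at h1
        | iteC E' body => simp [wrapF, plug] at h1
        | switchC E' cs dd => simp [wrapF, plug] at h1
        | callC f before E' after => simp [wrapF, plug] at h1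
        | opcallC op before E' after => simp [wrapF, plug] at h1
        | frameC E' L0 rets => simp [wrapF, plug] at h1
      | blockF Lj =>
        cases E with
        | hole => simp [wrapF, plug] at h1
        | scopedC E' rest L0 N0 =>
          simp only [wrapF, plug, Term.scopedBlock.injEq, List.cons.injEq] at h1
          obtain ⟨⟨h1a, h1b⟩, h1c, h1d⟩ := h1
          subst h1b; subst h1c; subst h1d
          exact Or.inr (Or.inl ⟨E', m, h1a, by simp, h2⟩)
        | brkC E' => simp [wrapF, plug] at h1
        | letC xs E' => simp [wrapF, plug] at h1
        | assignC xs E' => simp [wrapF, plug] at h1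
        | cntC E' => simp [wrapF, plug] at h1
        | iteC E' body => simp [wrapF, plug] at h1
        | switchC E' cs dd => simp [wrapF, plug] at h1
        | callC f before E' after => simp [wrapF, plug] at h1
        | opcallC op before E' after => simp [wrapF, plug] at h1
        | frameC E' L0 rets => simp [wrapF, plug] at h1
    · -- frame pop one level out: impossible since wrapF N g u is not a mode
      have hm := base_wrap_mode hb
      cases g <;> simp [wrapF, IsModeCore] at hm

/-- The bisimulation relation: equal, or in lockstep with an extra inner break
    frame on the left, or draining a caught break on the right. -/
def BRel (N : NS Val Op Ext) (c1 c2 : Config Val Op Ext Gl) : Prop :=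
  c1 = c2 ∨
  (∃ gs t G L Nn, Frame.brkF ∈ gs ∧
      c1 = (applyFrames N gs (.brkFrame t), G, L, Nn) ∧
      c2 = (applyFrames N gs t, G, L, Nn)) ∨
  (∃ gs G L Nn, Frame.brkF ∈ gs ∧
      c1 = (applyFrames N gs .regular, G, L, Nn) ∧
      c2 = (applyFrames N gs .brk, G, L, Nn))

lemma cont_stuck {MM : Term Val Op Ext} {G'' : Gl} {L'' : Store Val}
    {N'' : NS Val Op Ext} (hM : IsMode MM) {c : Config Val Op Ext Gl}
    (h : Steps D c (MM, G'', L'', N'')) :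
    ∀ gs G L Nn, c = (applyFrames N gs .cont, G, L, Nn) → Frame.brkF ∈ gs → False := by
  induction h using Relation.ReflTransGen.head_induction_on with
  | refl =>
    intro gs G L Nn heq hmem
    have := (Prod.mk.injEq _ _ _ _).mp heq
    exact applyFrames_ne_mode gs (List.ne_nil_of_mem hmem) _ MM hM this.1.symm
  | head hstep hrest ih =>
    intro gs G L Nn heq hmem
    subst heq
    rcases invStep gs hstep with ⟨E, S, S'', G', L', N', hb, h1, h2⟩ |
        ⟨E, m, h1, hE, h2⟩ | ⟨g, gs', S'', G', L', N', h1, hb, h2⟩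
    · cases E <;> simp [wrapF, plug] at h1
      subst h1; cases hb
    · cases E <;> simp [wrapF, plug] at h1
    · subst h1
      rcases base_wrap hb with ⟨_, ⟨hx, _⟩ | ⟨hx, _⟩⟩ |
          ⟨Lj, hg, hx, hS, hG, hL, hN⟩
      · rcases hx with hx | hx <;> exact nomatch hx
      · exact nomatch hx
      · rcases hx with hx | hx
        · exact nomatch hx
        · rw [hS, hG, hL, hN] at h2
          subst hg
          refine ih gs' _ _ _ h2 ?_
          simpa using hmem

lemma sim1 {MM : Term Val Op Ext} {G'' : Gl} {L'' : Store Val} {N'' : NS Val Op Ext}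
    (hM : IsMode MM) {c1 : Config Val Op Ext Gl}
    (h : Steps D c1 (MM, G'', L'', N'')) :
    ∀ c2, BRel N c1 c2 → Steps D c2 (MM, G'', L'', N'') := by
  induction h using Relation.ReflTransGen.head_induction_on with
  | refl =>
    intro c2 hrel
    rcases hrel with rfl | ⟨gs, t, G, L, Nn, hmem, h1, h2⟩ | ⟨gs, G, L, Nn, hmem, h1, h2⟩
    · exact .refl
    · exact absurd ((Prod.mk.injEq _ _ _ _).mp h1).1.symm
        (applyFrames_ne_mode gs (List.ne_nil_of_mem hmem) _ MM hM)
    · exact absurd ((Prod.mk.injEq _ _ _ _).mp h1).1.symm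
        (applyFrames_ne_mode gs (List.ne_nil_of_mem hmem) _ MM hM)
  | head hstep hrest ih =>
    intro c2 hrel
    rcases hrel with rfl | ⟨gs, t, G, L, Nn, hmem, h1, h2⟩ | ⟨gs, G, L, Nn, hmem, h1, h2⟩
    · exact .head hstep (ih _ (Or.inl rfl))
    · -- lockstep component
      subst h1; subst h2
      rcases invStep gs hstep with ⟨E, S, S'', G', L', N', hb, hp, hc⟩ |
          ⟨E, m, hp, hE, hc⟩ | ⟨g, gs', S'', G', L', N', hgs, hb, hc⟩
      · cases E with
        | hole =>
          simp only [plug] at hp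
          subst hp
          cases hb with
          | brkPass m G L Nn hm =>
            exact ih _ (Or.inl hc)
          | brkCatch G L Nn =>
            exact ih _ (Or.inr (Or.inr ⟨gs, G, L, Nn, hmem, hc, rfl⟩))
        | brkC E' =>
          simp only [plug, Term.brkFrame.injEq] at hp
          subst hp
          refine .head (stepA gs E' hb) (ih _ (Or.inr (Or.inl
            ⟨gs, plug E' S'', G', L', N', hmem, hc, rfl⟩)))
        | scopedC E' rest L0 N0 => simp [plug] at hp
        | letC xs E' => simp [plug] at hp
        | assignC xs E' => simp [plug] at hp
        | cntC E' => simp [plug] at hp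
        | iteC E' body => simp [plug] at hp
        | switchC E' cs dd => simp [plug] at hp
        | callC f before E' after => simp [plug] at hp
        | opcallC op before E' after => simp [plug] at hp
        | frameC E' L0 rets => simp [plug] at hp
      · cases E with
        | hole => simp [plug] at hp
        | brkC E' =>
          simp only [plug, Term.brkFrame.injEq] at hp
          subst hp
          refine .head (stepB gs E' m G L Nn ?_) (ih _ (Or.inl hc))
          intro hh
          exact List.ne_nil_of_mem hmem (framesCtx_eq_hole _ _ hh).1
        | scopedC E' rest L0 N0 => simp [plug] at hp
        | letC xs E' => simp [plug] at hp
        | assignC xs E' => simp [plug] at hp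
        | cntC E' => simp [plug] at hp
        | iteC E' body => simp [plug] at hp
        | switchC E' cs dd => simp [plug] at hp
        | callC f before E' after => simp [plug] at hp
        | opcallC op before E' after => simp [plug] at hp
        | frameC E' L0 rets => simp [plug] at hp
      · have hm := base_wrap_mode hb
        cases g <;> simp [wrapF, IsModeCore] at hm
    · -- draining component: c1 = regular under frames, c2 = brk under frames
      subst h1; subst h2
      rcases invStep gs hstep with ⟨E, S, S'', G', L', N', hb, hp, hc⟩ |
          ⟨E, m, hp, hE, hc⟩ | ⟨g, gs', S'', G', L', N', hgs, hb, hc⟩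
      · cases E <;> simp [plug] at hp
        subst hp; cases hb
      · cases E <;> simp [plug] at hp
      · subst hgs
        rcases base_wrap hb with ⟨hg, ⟨hx, hS, hG, hL, hN⟩ | ⟨hx, _⟩⟩ |
            ⟨Lj, hg, hx, hS, hG, hL, hN⟩
        · -- g = brkF : left passes regular, right catches break
          subst hg
          rw [hS, hG, hL, hN] at hc
          exact .head (stepA (D := D) gs' Ctx.hole (Base.brkCatch G L Nn)) (ih _ (Or.inl hc))
        · exact nomatch hx
        · -- g = blockF Lj : both exit the scoped block
          subst hg
          rw [hS, hG, hL, hN] at hc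
          refine .head (stepA (D := D) gs' Ctx.hole
            (Base.scopedExitIrr Term.brk [] Lj N G L Nn (by simp [IsIrregularCore]))) ?_
          exact ih _ (Or.inr (Or.inr ⟨gs', G, restrict L Lj, N, by simpa using hmem, hc, rfl⟩))

lemma sim2 {MM : Term Val Op Ext} {G'' : Gl} {L'' : Store Val} {N'' : NS Val Op Ext}
    (hM : IsMode MM) {c2 : Config Val Op Ext Gl}
    (h : Steps D c2 (MM, G'', L'', N'')) :
    ∀ c1, BRel N c1 c2 → Steps D c1 (MM, G'', L'', N'') := by
  induction h using Relation.ReflTransGen.head_induction_on with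
  | refl =>
    intro c1 hrel
    rcases hrel with rfl | ⟨gs, t, G, L, Nn, hmem, h1, h2⟩ | ⟨gs, G, L, Nn, hmem, h1, h2⟩
    · exact .refl
    · exact absurd ((Prod.mk.injEq _ _ _ _).mp h2).1.symm
        (applyFrames_ne_mode gs (List.ne_nil_of_mem hmem) _ MM hM)
    · exact absurd ((Prod.mk.injEq _ _ _ _).mp h2).1.symm
        (applyFrames_ne_mode gs (List.ne_nil_of_mem hmem) _ MM hM)
  | head hstep hrest ih =>
    intro c1 hrel
    rcases hrel with rfl | ⟨gs, t, G, L, Nn, hmem, h1, h2⟩ | ⟨gs, G, L, Nn, hmem, h1, h2⟩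
    · exact .head hstep (ih _ (Or.inl rfl))
    · -- lockstep component
      subst h1; subst h2
      rcases invStep gs hstep with ⟨E, S, S'', G', L', N', hb, hp, hc⟩ |
          ⟨E, m, hp, hE, hc⟩ | ⟨g, gs', S'', G', L', N', hgs, hb, hc⟩
      · subst hp
        exact .head (stepA gs (Ctx.brkC E) hb)
          (ih _ (Or.inr (Or.inl ⟨gs, plug E S'', G', L', N', hmem, rfl, hc⟩)))
      · subst hp
        refine .head (stepB gs (Ctx.brkC E) m G L Nn ?_) (ih _ (Or.inl hc.symm))
        intro hh
        exact nomatch (framesCtx_eq_hole _ _ hh).2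
      · subst hgs
        rcases base_wrap hb with ⟨hg, ⟨hx, hS, hG, hL, hN⟩ | ⟨hx, hS, hG, hL, hN⟩⟩ |
            ⟨Lj, hg, hx, hS, hG, hL, hN⟩
        · -- g = brkF, inner mode passes both frames
          subst hg
          rw [hS, hG, hL, hN] at hc
          exact .head (stepA (D := D) (.brkF :: gs') Ctx.hole (Base.brkPass t G L Nn hx))
            (.head (stepA (D := D) gs' Ctx.hole (Base.brkPass t G L Nn hx))
              (ih _ (Or.inl hc.symm)))
        · -- g = brkF, t = brk: inner catches, outer passes regular
          subst hg; subst hx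
          rw [hS, hG, hL, hN] at hc
          exact .head (stepA (D := D) (.brkF :: gs') Ctx.hole (Base.brkCatch G L Nn))
            (.head (stepA (D := D) gs' Ctx.hole
                (Base.brkPass .regular G L Nn (Or.inl rfl)))
              (ih _ (Or.inl hc.symm)))
        · -- g = blockF Lj
          subst hg
          rw [hS, hG, hL, hN] at hc
          have hmem' : Frame.brkF ∈ gs' := by simpa using hmem
          rw [show IsIrregularCore t = (t = Term.brk ∨ t = Term.cont ∨ t = Term.leave)
            from rfl] at hx
          rcases hx with rfl | rfl | rfl | rfl
          · -- t = regular
            exact .head (stepA (D := D) (.blockF Lj :: gs') Ctx.hole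
                (Base.brkPass .regular G L Nn (Or.inl rfl)))
              (.head (stepA (D := D) gs' Ctx.hole (Base.scopedExitReg Lj N G L Nn))
                (ih _ (Or.inl hc.symm)))
          · -- t = brk
            exact .head (stepA (D := D) (.blockF Lj :: gs') Ctx.hole
                (Base.brkCatch G L Nn))
              (.head (stepA (D := D) gs' Ctx.hole (Base.scopedExitReg Lj N G L Nn))
                (ih _ (Or.inr (Or.inr
                  ⟨gs', G, restrict L Lj, N, hmem', rfl, hc⟩))))
          · -- t = cont : the right-hand side is stuck, contradiction
            exact (cont_stuck hM hrest gs' G (restrict L Lj) N hc hmem').elim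
          · -- t = leave
            exact .head (stepA (D := D) (.blockF Lj :: gs') Ctx.hole
                (Base.brkPass .leave G L Nn (Or.inr rfl)))
              (.head (stepA (D := D) gs' Ctx.hole
                  (Base.scopedExitIrr .leave [] Lj N G L Nn (by simp [IsIrregularCore])))
                (ih _ (Or.inl hc.symm)))
    · -- draining component
      subst h1; subst h2
      rcases invStep gs hstep with ⟨E, S, S'', G', L', N', hb, hp, hc⟩ |
          ⟨E, m, hp, hE, hc⟩ | ⟨g, gs', S'', G', L', N', hgs, hb, hc⟩
      · cases E <;> simp [plug] at hp
        subst hp; cases hb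
      · cases E <;> simp [plug] at hp
      · subst hgs
        rcases base_wrap hb with ⟨hg, ⟨hx, hS, hG, hL, hN⟩ | ⟨hx, hS, hG, hL, hN⟩⟩ |
            ⟨Lj, hg, hx, hS, hG, hL, hN⟩
        · rcases hx with hx | hx <;> exact nomatch hx
        · -- g = brkF : right catches, left passes regular
          subst hg
          rw [hS, hG, hL, hN] at hc
          exact .head (stepA (D := D) gs' Ctx.hole
              (Base.brkPass .regular G L Nn (Or.inl rfl)))
            (ih _ (Or.inl hc.symm))
        · -- g = blockF Lj : both exit the block
          subst hg
          rw [hS, hG, hL, hN] at hc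
          exact .head (stepA (D := D) gs' Ctx.hole (Base.scopedExitReg Lj N G L Nn))
            (ih _ (Or.inr (Or.inr
              ⟨gs', G, restrict L Lj, N, by simpa using hmem, rfl, hc⟩)))

end BreakDropping

/-- Break dropping: inside an interleaving of break frames and
    scoped blocks with equal store domains and a common namespace, an inner
    break frame under an outer break frame is redundant. -/
theorem break_dropping {Val Op Ext Gl : Type} (D : Dialect Val Op Ext Gl)
    (fs : List (Frame Val)) (N : NS Val Op Ext) (d : Set Var)
    {S' MM : Term Val Op Ext} {G G'' : Gl} {L' L'' : Store Val}
    {N' N'' : NS Val Op Ext}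
    (hd : ∀ Lj, Frame.blockF Lj ∈ fs → Dom Lj = d) (hM : IsMode MM) :
    Steps D (Term.brkFrame (applyFrames N fs (Term.brkFrame S')), G, L', N')
        (MM, G'', L'', N'') ↔
      Steps D (Term.brkFrame (applyFrames N fs S'), G, L', N')
        (MM, G'', L'', N'') := by
  have key1 : Term.brkFrame (applyFrames N fs (Term.brkFrame S')) =
      applyFrames N (fs ++ [Frame.brkF]) (Term.brkFrame S') := by
    rw [applyFrames_append]; rfl
  have key2 : Term.brkFrame (applyFrames N fs S') =
      applyFrames N (fs ++ [Frame.brkF]) S' := by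
    rw [applyFrames_append]; rfl
  have hmem : Frame.brkF ∈ fs ++ [Frame.brkF] := by simp
  constructor
  · intro h
    exact sim1 hM h _ (Or.inr (Or.inl
      ⟨fs ++ [Frame.brkF], S', G, L', N', hmem, by rw [key1], by rw [key2]⟩))
  · intro h
    exact sim2 hM h _ (Or.inr (Or.inl
      ⟨fs ++ [Frame.brkF], S', G, L', N', hmem, by rw [key1], by rw [key2]⟩))


end Yul
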